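/- For ℓ : ℕ, let L_ℓ, σ_ℓ, and the structures M_α (for α : Fin ℓ → Bool) be as in the context. Then for every L_ℓ-sentence Φ: (there exists α : Fin ℓ → Bool with M_α ⊨ Φ) if and only if (there exists a nonempty L_ℓ-structure M with M ⊨ σ_ℓ and M ⊨ Φ). In particular, a quantified Boolean formula whose leading block is existentially quantified is true iff σ_ℓ ∧ Φ is satisfiable, where Φ is the prenex sentence encoding its remaining quantifiers and matrix. (This is the semantic core of the reduction from QBF used in the paper's Theorem 9 on GFODD Satisfiability for min-k-alternating diagrams.) -/

import Mathlib

open FirstOrder Language Structure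

/-- The relation symbols of the language with unary relations `P_T, P_1, …, P_ℓ`. -/
inductive LRel (ℓ : ℕ) : ℕ → Type
  | PT : LRel ℓ 1
  | Px : Fin ℓ → LRel ℓ 1

/-- The first-order language with unary relation symbols `P_T, P_1, …, P_ℓ` and no other
symbols. -/
def Lℓ (ℓ : ℕ) : FirstOrder.Language := ⟨fun _ => Empty, LRel ℓ⟩

/-- The atom `R x_i` for a unary relation symbol `R`. -/
def unaryAtom {ℓ n : ℕ} (R : (Lℓ ℓ).Relations 1) (i : Fin n) : (Lℓ ℓ).BoundedFormula Empty n :=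
  R.boundedFormula₁ (Term.var (Sum.inr i))

/-- The atom `x_i = x_j`. -/
def eqAtom {L : FirstOrder.Language} {n : ℕ} (i j : Fin n) : L.BoundedFormula Empty n :=
  Term.bdEqual (Term.var (Sum.inr i)) (Term.var (Sum.inr j))

/-- Conjunction of a list of bounded formulas. -/
def listConj {L : FirstOrder.Language} {n : ℕ} (l : List (L.BoundedFormula Empty n)) :
    L.BoundedFormula Empty n :=
  l.foldr (· ⊓ ·) ⊤

/-- The sentence
`∃y₁∃y₂∀z₁∀z₂∀z₃ [¬(P_T y₁ ↔ P_T y₂) ∧ ⋀ᵢ (P_i y₁ ↔ P_i y₂) ∧ (z₁ = z₂ ∨ z₁ = z₃ ∨ z₂ = z₃)]`. -/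
def sigmaL (ℓ : ℕ) : (Lℓ ℓ).Sentence :=
  ((∼((unaryAtom LRel.PT (0 : Fin 5)).iff (unaryAtom LRel.PT 1)) ⊓
      listConj ((List.finRange ℓ).map fun i =>
        (unaryAtom (LRel.Px i) (0 : Fin 5)).iff (unaryAtom (LRel.Px i) 1)) ⊓
      (eqAtom (2 : Fin 5) 3 ⊔ eqAtom (2 : Fin 5) 4 ⊔ eqAtom (3 : Fin 5) 4)).all.all.all).ex.ex

/-- The structure `M_α` on `Bool`: `P_T` holds of exactly `true`, and `P_i` holds of every
element if `α i = true` and of no element if `α i = false`. -/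
def Mα (ℓ : ℕ) (α : Fin ℓ → Bool) : (Lℓ ℓ).Structure Bool where
  funMap := fun {_} f _ => Empty.elim f
  RelMap
    | .PT => fun x => x 0 = true
    | .Px i => fun _ => α i = true

lemma realize_listConj {L : FirstOrder.Language} {n : ℕ} {M : Type*} [L.Structure M]
    (l : List (L.BoundedFormula Empty n)) (v : Empty → M) (xs : Fin n → M) :
    (listConj l).Realize v xs ↔ ∀ φ ∈ l, φ.Realize v xs := by
  induction l with
  | nil => simp [listConj]
  | cons a t ih =>
    have : listConj (a :: t) = a ⊓ listConj t := rfl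
    rw [this, BoundedFormula.realize_inf, ih]
    simp

lemma snoc5 {M : Type*} (a b c d e : M) :
    (Fin.snoc (Fin.snoc (Fin.snoc (Fin.snoc (Fin.snoc (default : Fin 0 → M) a) b) c) d) e
      : Fin 5 → M) = ![a, b, c, d, e] := by
  funext i
  fin_cases i <;> rfl

lemma realize_unaryAtom {ℓ n : ℕ} {M : Type} [inst : (Lℓ ℓ).Structure M]
    (R : LRel ℓ 1) (i : Fin n) (v : Empty → M) (xs : Fin n → M) :
    (unaryAtom R i).Realize v xs ↔ @RelMap (Lℓ ℓ) M inst 1 R ![xs i] := by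
  exact BoundedFormula.realize_rel₁ (L := Lℓ ℓ) (R := R) (t := Term.var (Sum.inr i))

lemma realize_sigmaL {ℓ : ℕ} {M : Type} [inst : (Lℓ ℓ).Structure M] :
    M ⊨ sigmaL ℓ ↔ ∃ y₁ y₂ : M,
      ¬(@RelMap (Lℓ ℓ) M inst 1 LRel.PT ![y₁] ↔ @RelMap (Lℓ ℓ) M inst 1 LRel.PT ![y₂]) ∧
      (∀ i : Fin ℓ, @RelMap (Lℓ ℓ) M inst 1 (LRel.Px i) ![y₁] ↔
        @RelMap (Lℓ ℓ) M inst 1 (LRel.Px i) ![y₂]) ∧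
      ∀ z₁ z₂ z₃ : M, z₁ = z₂ ∨ z₁ = z₃ ∨ z₂ = z₃ := by
  simp only [sigmaL, Sentence.Realize, Formula.Realize, BoundedFormula.realize_ex,
    BoundedFormula.realize_all, BoundedFormula.realize_inf, BoundedFormula.realize_not,
    BoundedFormula.realize_iff, BoundedFormula.realize_sup, BoundedFormula.realize_bdEqual,
    realize_listConj, List.mem_map, List.mem_finRange, true_and, forall_exists_index,
    forall_apply_eq_imp_iff, realize_unaryAtom, eqAtom,
    BoundedFormula.realize_rel₁, Term.realize_var, Sum.elim_inr]
  simp only [snoc5, realize_unaryAtom, Matrix.cons_val_zero, Matrix.cons_val_one, Matrix.head_cons,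
    Matrix.cons_val_two, Matrix.tail_cons, Matrix.cons_val_three, Matrix.cons_val_four]
  constructor
  · rintro ⟨y₁, y₂, h⟩
    refine ⟨y₁, y₂, (h y₁ y₁ y₁).1.1, (h y₁ y₁ y₁).1.2, fun z₁ z₂ z₃ => ?_⟩
    have := (h z₁ z₂ z₃).2; tauto
  · rintro ⟨y₁, y₂, h1, h2, h3⟩
    refine ⟨y₁, y₂, fun z₁ z₂ z₃ => ⟨⟨h1, h2⟩, ?_⟩⟩
    have := h3 z₁ z₂ z₃; tauto

lemma fin1_eq {M : Type*} (f g : Fin 1 → M) (h : f 0 = g 0) : f = g := by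
  funext i
  have : i = 0 := Subsingleton.elim i 0
  rw [this, h]

lemma backward_aux {ℓ : ℕ} {M : Type} [inst : (Lℓ ℓ).Structure M] (yT yF : M)
    (hT : @RelMap (Lℓ ℓ) M inst 1 LRel.PT ![yT])
    (hF : ¬ @RelMap (Lℓ ℓ) M inst 1 LRel.PT ![yF])
    (hP : ∀ i : Fin ℓ, @RelMap (Lℓ ℓ) M inst 1 (LRel.Px i) ![yT] ↔
      @RelMap (Lℓ ℓ) M inst 1 (LRel.Px i) ![yF])
    (h3 : ∀ z₁ z₂ z₃ : M, z₁ = z₂ ∨ z₁ = z₃ ∨ z₂ = z₃)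
    (Φ : (Lℓ ℓ).Sentence) (hΦ : M ⊨ Φ) :
    ∃ α : Fin ℓ → Bool, @Sentence.Realize (Lℓ ℓ) Bool (Mα ℓ α) Φ := by
  classical
  set α : Fin ℓ → Bool := fun i => decide (@RelMap (Lℓ ℓ) M inst 1 (LRel.Px i) ![yT]) with hα
  refine ⟨α, ?_⟩
  have hne : yT ≠ yF := by
    rintro rfl; exact hF hT
  have f : Bool → M := fun b => if b then yT else yF
  have hbij : Function.Bijective (fun b : Bool => if b then yT else yF) := by
    constructor
    · intro a b hab
      cases a <;> cases b <;> simp at hab <;> first | rfl | exact absurd hab hne | exact absurd hab.symm hne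
    · intro z
      rcases h3 z yT yF with h | h | h
      · exact ⟨true, h.symm⟩
      · exact ⟨false, h.symm⟩
      · exact absurd h hne
  let e : Bool ≃ M := Equiv.ofBijective _ hbij
  have he : ∀ b : Bool, e b = if b then yT else yF := fun _ => rfl
  letI : (Lℓ ℓ).Structure Bool := Mα ℓ α
  let g : @Language.Equiv (Lℓ ℓ) Bool M (Mα ℓ α) inst :=
    { toEquiv := e
      map_fun' := fun {n} F _ => Empty.elim F
      map_rel' := by
        intro n r x
        match n, r with
        | _, LRel.PT =>
          have hx : (e.toFun ∘ x) = ![e (x 0)] := fin1_eq _ _ rfl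
          rw [hx]
          show _ ↔ (x 0 = true)
          cases hb : x 0 <;> simp [he]
          · exact hF
          · exact hT
        | _, LRel.Px i =>
          have hx : (e.toFun ∘ x) = ![e (x 0)] := fin1_eq _ _ rfl
          rw [hx]
          show _ ↔ (α i = true)
          rw [hα]
          simp only [decide_eq_true_eq]
          cases hb : x 0 <;> simp [he]
          · exact (hP i).symm
      }
  exact (StrongHomClass.realize_sentence g Φ).2 hΦ

/-- **Semantic core of the QBF reduction in Theorem 9.** A sentence `Φ` holds in some Boolean
structure `M_α` iff `σ_ℓ ∧ Φ` is satisfiable in some nonempty structure. -/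
theorem exists_Mα_iff_exists_model_sigmaL (ℓ : ℕ) (Φ : (Lℓ ℓ).Sentence) :
    (∃ α : Fin ℓ → Bool, @Sentence.Realize (Lℓ ℓ) Bool (Mα ℓ α) Φ) ↔
      (∃ (M : Type) (instM : (Lℓ ℓ).Structure M), Nonempty M ∧
        @Sentence.Realize (Lℓ ℓ) M instM (sigmaL ℓ) ∧
        @Sentence.Realize (Lℓ ℓ) M instM Φ) := by
  constructor
  · rintro ⟨α, hα⟩
    letI : (Lℓ ℓ).Structure Bool := Mα ℓ α
    refine ⟨Bool, Mα ℓ α, ⟨true⟩, ?_, hα⟩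
    rw [realize_sigmaL]
    refine ⟨true, false, ?_, fun i => Iff.rfl, fun z₁ z₂ z₃ => by revert z₁ z₂ z₃; decide⟩
    show ¬((![true] 0 = true) ↔ (![false] 0 = true))
    simp
  · rintro ⟨M, inst, ⟨x⟩, hσ, hΦ⟩
    rw [realize_sigmaL] at hσ
    obtain ⟨y₁, y₂, h1, h2, h3⟩ := hσ
    by_cases hp : @RelMap (Lℓ ℓ) M inst 1 LRel.PT ![y₁]
    · exact backward_aux y₁ y₂ hp (fun h => h1 ⟨fun _ => h, fun _ => hp⟩) h2 h3 Φ hΦ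
    · have hp2 : @RelMap (Lℓ ℓ) M inst 1 LRel.PT ![y₂] := by
        by_contra h
        exact h1 ⟨fun a => absurd a hp, fun a => absurd a h⟩
      exact backward_aux y₂ y₁ hp2 hp (fun i => (h2 i).symm) (fun z₁ z₂ z₃ => h3 z₁ z₂ z₃) Φ hΦ
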